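/- arXiv:2305.05620 — 2 statements merged into one kernel-verified Lean document; each statement's English description precedes it below -/
import Mathlib

section
/- Let s > 0, x_max > 0 and let x : ℝ → ℝ solve the logistic equation x'(t) = (s/x_max)·x(t)·(x_max − x(t)). Then for every n ≥ 2 and every t, x^(n)(t) = (−s/x_max)^n · Σ_{k=0}^{n−1} ⟨n,k⟩ · x(t)^{k+1} · (x(t) − x_max)^{n−k}, where ⟨n,k⟩ denotes the Eulerian number. -/
/-- The Eulerian number ⟨n,k⟩: the number of permutations of {1,…,n} (modelled as
`Fin n`) having exactly `k` ascents, where an ascent of σ is a position `i` with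
`i + 1 < n` and `σ i < σ (i+1)`. -/
noncomputable def eulerianNumber (n k : ℕ) : ℕ :=
  Nat.card {σ : Equiv.Perm (Fin n) //
    Nat.card {i : Fin n // ∃ h : (i : ℕ) + 1 < n, σ i < σ ⟨(i : ℕ) + 1, h⟩} = k}

open Equiv Finset
namespace LogisticEuler

variable {N : ℕ}


noncomputable def asc {m : ℕ} (σ : Equiv.Perm (Fin m)) : ℕ :=
  Nat.card {i : Fin m // ∃ h : (i : ℕ) + 1 < m, σ i < σ ⟨(i : ℕ) + 1, h⟩}

def w {m : ℕ} (σ : Equiv.Perm (Fin m)) (v : ℕ) : ℕ :=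
  if h : v < m then (σ ⟨v, h⟩ : ℕ) else 0

def b {m : ℕ} (σ : Equiv.Perm (Fin m)) (j : ℕ) : ℕ :=
  if w σ j < w σ (j + 1) then 1 else 0

lemma w_lt {m : ℕ} (σ : Equiv.Perm (Fin m)) (v : ℕ) (h : v < m) :
    w σ v = (σ ⟨v, h⟩ : ℕ) := dif_pos h

lemma b_le_one {m : ℕ} (σ : Equiv.Perm (Fin m)) (j : ℕ) : b σ j ≤ 1 := by
  unfold b; split <;> omega

lemma asc_eq_sum {m : ℕ} (σ : Equiv.Perm (Fin (m + 1))) :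
    asc σ = ∑ j ∈ range m, b σ j := by
  classical
  rw [asc, Nat.card_eq_fintype_card, Fintype.card_subtype, card_filter]
  have key : ∀ i : Fin (m+1),
      (if (∃ h : (i : ℕ) + 1 < m + 1, σ i < σ ⟨(i : ℕ) + 1, h⟩) then 1 else 0)
      = (fun v : ℕ => if v + 1 < m + 1 ∧ w σ v < w σ (v+1) then 1 else 0) (i : ℕ) := by
    intro i
    simp only []
    congr 1
    apply propext
    constructor
    · rintro ⟨h, hlt⟩
      refine ⟨h, ?_⟩
      rw [w_lt σ _ (by omega), w_lt σ _ h]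
      exact_mod_cast hlt
    · rintro ⟨h, hlt⟩
      refine ⟨h, ?_⟩
      rw [w_lt σ _ (by omega : (i:ℕ) < m+1), w_lt σ _ h] at hlt
      have : σ ⟨(i:ℕ), by omega⟩ < σ ⟨(i:ℕ)+1, h⟩ := by exact_mod_cast hlt
      simpa using this
  rw [Finset.sum_congr rfl (fun i _ => key i),
    Fin.sum_univ_eq_sum_range (fun v : ℕ => if v + 1 < m + 1 ∧ w σ v < w σ (v+1) then 1 else 0) (m+1),
    Finset.sum_range_succ, if_neg (by omega), add_zero]
  refine Finset.sum_congr rfl fun j hj => ?_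
  have hj' : j < m := mem_range.mp hj
  unfold b
  by_cases hb : w σ j < w σ (j+1)
  · rw [if_pos ⟨by omega, hb⟩, if_pos hb]
  · rw [if_neg (by tauto), if_neg hb]




/-- insert the maximum at position `p` -/
def ins (p : Fin (N + 2)) (τ : Equiv.Perm (Fin (N + 1))) : Equiv.Perm (Fin (N + 2)) :=
  ((finSuccEquiv' p).trans (Equiv.optionCongr τ)).trans (finSuccEquiv' (Fin.last (N+1))).symm

@[simp] lemma ins_apply_self (p : Fin (N + 2)) (τ : Equiv.Perm (Fin (N + 1))) :
    ins p τ p = Fin.last (N+1) := by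
  simp [ins, finSuccEquiv'_at]

@[simp] lemma ins_apply_succAbove (p : Fin (N + 2)) (τ : Equiv.Perm (Fin (N + 1)))
    (i : Fin (N+1)) : ins p τ (p.succAbove i) = Fin.castSucc (τ i) := by
  simp [ins, finSuccEquiv'_succAbove, finSuccEquiv'_symm_some, Fin.succAbove_last_apply]

/-- delete the maximum -/
def del (σ : Equiv.Perm (Fin (N + 2))) : Equiv.Perm (Fin (N + 1)) :=
  Equiv.removeNone (((finSuccEquiv' (σ⁻¹ (Fin.last (N+1)))).symm.trans σ).trans
    (finSuccEquiv' (Fin.last (N+1))))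

lemma castSucc_del (σ : Equiv.Perm (Fin (N + 2))) (i : Fin (N+1)) :
    Fin.castSucc (del σ i) = σ ((σ⁻¹ (Fin.last (N+1))).succAbove i) := by
  set q := σ⁻¹ (Fin.last (N+1)) with hq
  set e := ((finSuccEquiv' q).symm.trans σ).trans (finSuccEquiv' (Fin.last (N+1))) with he
  have hne : σ (q.succAbove i) ≠ Fin.last (N+1) := by
    intro h
    have : q.succAbove i = q := by
      apply σ.injective
      rw [h, hq]; simp
    exact Fin.succAbove_ne q i this
  obtain ⟨y, hy⟩ : ∃ y : Fin (N+1), σ (q.succAbove i) = Fin.castSucc y := by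
    rcases Fin.eq_castSucc_or_eq_last (σ (q.succAbove i)) with ⟨y, hy⟩ | h
    · exact ⟨y, hy⟩
    · exact absurd h hne
  have hes : e (some i) = some y := by
    simp only [he, Equiv.trans_apply, finSuccEquiv'_symm_some, hy]
    rw [← Fin.succAbove_last_apply, finSuccEquiv'_succAbove]
  have := Equiv.removeNone_some e ⟨y, hes⟩
  rw [hes] at this
  have : del σ i = y := by
    have h2 : some (del σ i) = some y := this
    exact Option.some_injective _ h2
  rw [this, hy]

def insEquiv : Equiv.Perm (Fin (N + 1)) × Fin (N + 2) ≃ Equiv.Perm (Fin (N + 2)) where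
  toFun x := ins x.2 x.1
  invFun σ := (del σ, σ⁻¹ (Fin.last (N+1)))
  left_inv := by
    rintro ⟨τ, p⟩
    have hp : (ins p τ)⁻¹ (Fin.last (N+1)) = p := by
      apply (ins p τ).injective
      rw [Equiv.Perm.inv_def, Equiv.apply_symm_apply, ins_apply_self]
    refine Prod.ext ?_ hp
    · refine Equiv.ext fun i => ?_
      have := castSucc_del (ins p τ) i
      rw [hp, ins_apply_succAbove] at this
      exact Fin.castSucc_injective _ this
  right_inv := by
    intro σ
    set q := σ⁻¹ (Fin.last (N+1)) with hq
    refine Equiv.ext fun j => ?_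
    rcases eq_or_ne j q with rfl | hne
    · rw [ins_apply_self]
      simp [hq]
    · obtain ⟨i, rfl⟩ := Fin.exists_succAbove_eq hne
      rw [ins_apply_succAbove, castSucc_del]



variable {N : ℕ}

lemma w_le {m : ℕ} (τ : Equiv.Perm (Fin (m+1))) (v : ℕ) : w τ v ≤ m := by
  unfold w
  split
  · exact Nat.lt_succ_iff.mp (Fin.is_lt _)
  · omega

lemma w_ins (p : Fin (N+2)) (τ : Equiv.Perm (Fin (N+1))) (v : ℕ) (hv : v < N + 2) :
    w (ins p τ) v = if v = (p : ℕ) then N + 1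
      else if v < (p : ℕ) then w τ v else w τ (v - 1) := by
  rcases Nat.lt_trichotomy v (p : ℕ) with hlt | heq | hgt
  · rw [if_neg (by omega), if_pos hlt]
    have hv1 : v < N + 1 := by have := p.is_lt; omega
    have hsa : p.succAbove ⟨v, hv1⟩ = ⟨v, hv⟩ := by
      rw [Fin.succAbove_of_castSucc_lt]
      · rfl
      · exact hlt
    rw [w, dif_pos hv, ← hsa, ins_apply_succAbove, w, dif_pos hv1]
    rfl
  · rw [if_pos heq]
    have : (⟨v, hv⟩ : Fin (N+2)) = p := Fin.ext heq
    rw [w, dif_pos hv, this, ins_apply_self]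
    rfl
  · rw [if_neg (by omega), if_neg (by omega)]
    have hv1 : v - 1 < N + 1 := by omega
    have hsa : p.succAbove ⟨v - 1, hv1⟩ = ⟨v, hv⟩ := by
      rw [Fin.succAbove_of_le_castSucc]
      · ext; simp [Fin.succ]; omega
      · show (p : ℕ) ≤ v - 1
        omega
    rw [w, dif_pos hv, ← hsa, ins_apply_succAbove, w, dif_pos hv1]
    rfl

lemma b_ins (p : Fin (N+2)) (τ : Equiv.Perm (Fin (N+1))) (i : ℕ) (hi : i < N + 1) :
    b (ins p τ) i = if i + 1 < (p : ℕ) then b τ i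
      else if i + 1 = (p : ℕ) then 1
      else if i = (p : ℕ) then 0 else b τ (i - 1) := by
  have h1 := w_ins p τ i (by omega)
  have h2 := w_ins p τ (i+1) (by omega)
  have hle0 := w_le τ i
  have hle1 := w_le τ (i+1)
  have hle2 := w_le τ (i-1)
  unfold b
  rw [h1, h2]
  rcases i with _ | j
  · simp only [Nat.add_sub_cancel, Nat.zero_sub]
    split_ifs <;> omega
  · simp only [Nat.add_sub_cancel, Nat.succ_sub_one] at *
    split_ifs <;> omega



lemma sum_formula : ∀ (N : ℕ) (pv : ℕ), pv ≤ N + 1 → ∀ (bb : ℕ → ℕ), (∀ j, bb j ≤ 1) →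
    (∑ i ∈ range (N+1), (if i+1 < pv then bb i else if i+1 = pv then 1
        else if i = pv then 0 else bb (i-1)))
      + (if pv = 0 then 1 else if pv ≤ N then bb (pv - 1) else 0)
    = (∑ j ∈ range N, bb j) + 1 := by
  intro N
  induction N with
  | zero =>
    intro pv hp bb hb
    interval_cases pv <;> simp
  | succ N ih =>
    intro pv hp bb hb
    set f : ℕ → ℕ := fun i => if i+1 < pv then bb i else if i+1 = pv then 1
        else if i = pv then 0 else bb (i-1) with hf
    have hfN : f (N+1) = if pv = N+2 then 1 else if pv = N+1 then 0 else bb N := by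
      simp only [hf, Nat.add_sub_cancel]
      split_ifs <;> omega
    rw [Finset.sum_range_succ f (N+1), Finset.sum_range_succ bb N, hfN]
    rcases Nat.lt_or_ge pv (N+2) with hc | hc
    · have hih := ih pv (by omega) bb hb
      rw [← hf] at hih
      have heta : (Finset.range (N+1)).sum f = ∑ x ∈ Finset.range (N+1), f x := rfl
      by_cases h0 : pv = 0
      · rw [if_neg (show ¬ pv = N+2 by omega), if_neg (show ¬ pv = N+1 by omega), if_pos h0]
        rw [if_pos h0] at hih
        omega
      · by_cases h1 : pv ≤ N
        · rw [if_neg (show ¬ pv = N+2 by omega), if_neg (show ¬ pv = N+1 by omega),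
            if_neg h0, if_pos (show pv ≤ N+1 by omega)]
          rw [if_neg h0, if_pos h1] at hih
          omega
        · have hpv : pv = N + 1 := by omega
          subst hpv
          rw [if_neg (show ¬ N+1 = N+2 by omega), if_pos rfl, if_neg h0,
            if_pos (le_refl (N+1)), Nat.add_sub_cancel]
          rw [if_neg h0, if_neg h1] at hih
          omega
    · have hpv : pv = N + 2 := by omega
      subst hpv
      have hmid : ∑ i ∈ range (N+1), f i = ∑ i ∈ range (N+1), bb i := by
        refine Finset.sum_congr rfl fun i hi => ?_
        simp only [hf]
        rw [if_pos (by have := mem_range.mp hi; omega)]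
      rw [hmid, Finset.sum_range_succ bb N]
      rw [if_pos rfl, if_neg (by omega), if_neg (by omega)]
      try omega

lemma count_inner (a k : ℕ) : ∀ (N : ℕ) (bb : ℕ → ℕ), (∀ j, bb j ≤ 1) →
    (∑ v ∈ range N, if a + 1 - bb v = k then 1 else 0)
      = (if k = a then ∑ v ∈ range N, bb v else if k = a + 1 then N - ∑ v ∈ range N, bb v else 0) := by
  intro N
  induction N with
  | zero => intro bb hb; simp
  | succ N ih =>
    intro bb hb
    rw [Finset.sum_range_succ, Finset.sum_range_succ, ih bb hb]
    have hbN := hb N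
    have hsum : (∑ v ∈ range N, bb v) ≤ N := by
      calc (∑ v ∈ range N, bb v) ≤ ∑ v ∈ range N, 1 := Finset.sum_le_sum fun i _ => hb i
      _ = N := by simp
    interval_cases h : bb N <;> split_ifs <;> omega



lemma asc_le {m : ℕ} (τ : Equiv.Perm (Fin (m+1))) : asc τ ≤ m := by
  rw [asc_eq_sum]
  calc (∑ j ∈ range m, b τ j) ≤ ∑ j ∈ range m, 1 := Finset.sum_le_sum fun i _ => b_le_one τ i
  _ = m := by simp

lemma asc_ins (p : Fin (N+2)) (τ : Equiv.Perm (Fin (N+1))) :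
    asc (ins p τ) + (if (p:ℕ) = 0 then 1 else if (p:ℕ) ≤ N then b τ ((p:ℕ)-1) else 0)
      = asc τ + 1 := by
  rw [asc_eq_sum, asc_eq_sum]
  have hsf := sum_formula N (p:ℕ) (by have := p.is_lt; omega) (b τ) (b_le_one τ)
  rw [← hsf]
  congr 1
  refine Finset.sum_congr rfl fun i hi => ?_
  exact b_ins p τ i (mem_range.mp hi)

lemma count_p (τ : Equiv.Perm (Fin (N+1))) (k : ℕ) :
    (∑ p : Fin (N+2), if asc (ins p τ) = k then 1 else 0)
      = if asc τ = k then k + 1 else if asc τ + 1 = k then N + 2 - k else 0 := by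
  have hpoint : ∀ p : Fin (N+2), (if asc (ins p τ) = k then 1 else 0)
      = (fun v : ℕ => if asc τ + 1 - (if v = 0 then 1 else if v ≤ N then b τ (v-1) else 0) = k
          then 1 else 0) (p : ℕ) := by
    intro p
    have h := asc_ins p τ
    have hδ : (if (p:ℕ) = 0 then 1 else if (p:ℕ) ≤ N then b τ ((p:ℕ)-1) else 0) ≤ 1 := by
      have := b_le_one τ ((p:ℕ)-1); split_ifs <;> omega
    have hval : asc (ins p τ)
        = asc τ + 1 - (if (p:ℕ) = 0 then 1 else if (p:ℕ) ≤ N then b τ ((p:ℕ)-1) else 0) := by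
      omega
    simp only [hval]
  rw [Finset.sum_congr rfl (fun p _ => hpoint p),
    Fin.sum_univ_eq_sum_range (fun v : ℕ => if asc τ + 1 -
      (if v = 0 then 1 else if v ≤ N then b τ (v-1) else 0) = k then 1 else 0) (N+2),
    Finset.sum_range_succ, Finset.sum_range_succ']
  have h0 : (if asc τ + 1 - (if (0:ℕ) = 0 then 1 else if 0 ≤ N then b τ (0-1) else 0) = k
      then 1 else 0) = if asc τ = k then 1 else 0 := by
    simp only [if_pos rfl]
    split_ifs <;> omega
  have hN : (if asc τ + 1 - (if N+1 = 0 then 1 else if N+1 ≤ N then b τ (N+1-1) else 0) = k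
      then 1 else 0) = if asc τ + 1 = k then 1 else 0 := by
    rw [if_neg (Nat.succ_ne_zero N), if_neg (by omega : ¬ N+1 ≤ N)]
    split_ifs <;> omega
  have hmid : (∑ i ∈ range N, if asc τ + 1 -
        (if i+1 = 0 then 1 else if i+1 ≤ N then b τ (i+1-1) else 0) = k then 1 else 0)
      = ∑ i ∈ range N, (if asc τ + 1 - b τ i = k then 1 else 0) := by
    refine Finset.sum_congr rfl fun i hi => ?_
    have hi' := mem_range.mp hi
    rw [if_neg (Nat.succ_ne_zero i), if_pos (by omega : i+1 ≤ N), Nat.add_sub_cancel]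
  rw [h0, hN, hmid, count_inner (asc τ) k N (b τ) (b_le_one τ)]
  have hb : (∑ v ∈ range N, b τ v) = asc τ := (asc_eq_sum τ).symm
  have hle := asc_le τ
  rw [hb]
  split_ifs <;> omega

lemma euler_card (n k : ℕ) : eulerianNumber n k
    = ∑ σ : Equiv.Perm (Fin n), if asc σ = k then 1 else 0 := by
  classical
  show Nat.card {σ : Equiv.Perm (Fin n) // asc σ = k} = _
  rw [Nat.card_eq_fintype_card, Fintype.card_subtype, card_filter]

lemma euler_succ (k : ℕ) : eulerianNumber (N+2) k
    = (k+1) * eulerianNumber (N+1) k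
      + (N+2-k) * (∑ τ : Equiv.Perm (Fin (N+1)), if asc τ + 1 = k then 1 else 0) := by
  rw [euler_card]
  rw [← Equiv.sum_comp insEquiv (fun σ => if asc σ = k then 1 else 0)]
  rw [Fintype.sum_prod_type]
  have hinner : ∀ τ : Equiv.Perm (Fin (N+1)),
      (∑ p : Fin (N+2), if asc (insEquiv (τ, p)) = k then 1 else 0)
      = (k+1) * (if asc τ = k then 1 else 0) + (N+2-k) * (if asc τ + 1 = k then 1 else 0) := by
    intro τ
    have : (∑ p : Fin (N+2), if asc (insEquiv (τ, p)) = k then 1 else 0)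
        = ∑ p : Fin (N+2), if asc (ins p τ) = k then 1 else 0 := rfl
    rw [this, count_p]
    split_ifs <;> omega
  rw [Finset.sum_congr rfl (fun τ _ => hinner τ), Finset.sum_add_distrib,
    ← Finset.mul_sum, ← Finset.mul_sum, ← euler_card]

lemma euler_top : eulerianNumber (N+1) (N+1) = 0 := by
  rw [euler_card]
  refine Finset.sum_eq_zero fun τ _ => ?_
  rw [if_neg]
  have := asc_le τ
  omega

lemma euler_zero_succ : eulerianNumber (N+2) 0 = eulerianNumber (N+1) 0 := by
  rw [euler_succ 0]
  have : (∑ τ : Equiv.Perm (Fin (N+1)), if asc τ + 1 = 0 then 1 else 0) = 0 :=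
    Finset.sum_eq_zero fun τ _ => by rw [if_neg (by omega)]
  rw [this]
  ring

lemma euler_rec (k : ℕ) : eulerianNumber (N+2) (k+1)
    = (k+2) * eulerianNumber (N+1) (k+1) + (N+1-k) * eulerianNumber (N+1) k := by
  rw [euler_succ (k+1)]
  have h1 : (∑ τ : Equiv.Perm (Fin (N+1)), if asc τ + 1 = k + 1 then 1 else 0)
      = eulerianNumber (N+1) k := by
    rw [euler_card]
    refine Finset.sum_congr rfl fun τ _ => ?_
    split_ifs <;> omega
  rw [h1]
  have : N + 2 - (k+1) = N + 1 - k := by omega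
  rw [this]

lemma euler_one_zero : eulerianNumber 1 0 = 1 := by
  rw [euler_card]
  have : ∀ σ : Equiv.Perm (Fin 1), asc σ = 0 := fun σ => by
    rw [asc_eq_sum]; simp
  rw [Finset.sum_congr rfl (fun σ _ => by rw [if_pos (this σ)])]
  simp


end LogisticEuler

lemma sum_step (n : ℕ) (hn : 1 ≤ n) (u v : ℝ) :
    ∑ k ∈ range n, ((eulerianNumber n k : ℝ) *
        ((k+1 : ℝ) * u^k * v^(n-k) + ((n-k : ℕ) : ℝ) * u^(k+1) * v^(n-k-1)) * (u * v))
      = ∑ k ∈ range (n+1), (eulerianNumber (n+1) k : ℝ) * u^(k+1) * v^(n+1-k) := by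
  obtain ⟨N, rfl⟩ : ∃ N, n = N + 1 := ⟨n - 1, by omega⟩
  set f : ℕ → ℝ := fun k => ((k:ℝ)+1) * (eulerianNumber (N+1) k : ℝ) * u^(k+1) * v^(N+1+1-k) with hf
  set g : ℕ → ℝ := fun k => if k = 0 then 0 else
      (((N+1+1-k : ℕ)) : ℝ) * (eulerianNumber (N+1) (k-1) : ℝ) * u^(k+1) * v^(N+1+1-k) with hg
  have hterm : ∀ k ∈ range (N+1), (eulerianNumber (N+1) k : ℝ) *
        ((k+1 : ℝ) * u^k * v^(N+1-k) + ((N+1-k : ℕ) : ℝ) * u^(k+1) * v^(N+1-k-1)) * (u * v)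
      = f k + g (k+1) := by
    intro k hk
    have hk' : k < N + 1 := mem_range.mp hk
    obtain ⟨j, hj⟩ : ∃ j, N + 1 - k = j + 1 := ⟨N - k, by omega⟩
    have h2 : N + 1 - k - 1 = j := by omega
    have h3 : N + 1 + 1 - k = j + 2 := by omega
    have h4 : N + 1 + 1 - (k+1) = j + 1 := by omega
    simp only [hf, hg, if_neg (Nat.succ_ne_zero k), Nat.add_sub_cancel]
    rw [h2, hj, h3, h4]
    push_cast
    ring
  have hR : ∀ k ∈ range (N+1+1), (eulerianNumber (N+1+1) k : ℝ) * u^(k+1) * v^(N+1+1-k)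
      = f k + g k := by
    intro k hk
    have hk' : k < N + 1 + 1 := mem_range.mp hk
    rcases Nat.eq_zero_or_pos k with rfl | hkpos
    · simp only [hf, hg, if_pos rfl, Nat.sub_zero, add_zero]
      rw [show eulerianNumber (N+1+1) 0 = eulerianNumber (N+1) 0 from LogisticEuler.euler_zero_succ]
      push_cast; ring
    · obtain ⟨j, rfl⟩ : ∃ j, k = j + 1 := ⟨k - 1, by omega⟩
      simp only [hf, hg, if_neg (Nat.succ_ne_zero j), Nat.add_sub_cancel]
      rw [show eulerianNumber (N+1+1) (j+1)
          = (j+2) * eulerianNumber (N+1) (j+1) + (N+1-j) * eulerianNumber (N+1) j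
        from LogisticEuler.euler_rec j]
      have h5 : N + 1 + 1 - (j+1) = N + 1 - j := by omega
      obtain ⟨i, hi⟩ : ∃ i, N + 1 - j = i + 1 := ⟨N - j, by omega⟩
      rw [h5, hi]
      push_cast
      ring
  have hfn : f (N+1) = 0 := by
    simp only [hf]
    rw [show eulerianNumber (N+1) (N+1) = 0 from LogisticEuler.euler_top]
    push_cast; ring
  have hg0 : g 0 = 0 := by simp [hg]
  rw [Finset.sum_congr rfl hterm, Finset.sum_add_distrib,
    Finset.sum_congr rfl hR, Finset.sum_add_distrib,
    Finset.sum_range_succ f (N+1), Finset.sum_range_succ' g (N+1),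
    hfn, hg0, add_zero, add_zero]

/-- For a solution x of the logistic equation
x' = (s/x_max)·x·(x_max − x) with s > 0, x_max > 0, the n-th derivative (n ≥ 2) is
x⁽ⁿ⁾(t) = (−s/x_max)ⁿ · Σ_{k=0}^{n−1} ⟨n,k⟩ x(t)^{k+1} (x(t) − x_max)^{n−k}. -/
theorem logistic_iterated_deriv_eulerian
    (s xmax : ℝ) (hs : 0 < s) (hxmax : 0 < xmax) (x : ℝ → ℝ)
    (hdiff : Differentiable ℝ x)
    (hode : ∀ t, deriv x t = s / xmax * x t * (xmax - x t)) :
    ∀ n : ℕ, 2 ≤ n → ∀ t : ℝ,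
      iteratedDeriv n x t =
        (-s / xmax) ^ n * ∑ k ∈ Finset.range n,
          (eulerianNumber n k : ℝ) * x t ^ (k + 1) * (x t - xmax) ^ (n - k) := by
  have hx0 : xmax ≠ 0 := ne_of_gt hxmax
  have hode' : ∀ t, deriv x t = (-s/xmax) * x t * (x t - xmax) := by
    intro t; rw [hode t]; field_simp; ring
  have key : ∀ n : ℕ, 1 ≤ n → ∀ t : ℝ,
      iteratedDeriv n x t =
        (-s / xmax) ^ n * ∑ k ∈ Finset.range n,
          (eulerianNumber n k : ℝ) * x t ^ (k + 1) * (x t - xmax) ^ (n - k) := by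
    intro n hn
    induction n, hn using Nat.le_induction with
    | base =>
      intro t
      rw [iteratedDeriv_one, hode' t, Finset.sum_range_one,
        show eulerianNumber 1 0 = 1 from LogisticEuler.euler_one_zero]
      push_cast
      ring
    | succ n hn ih =>
      intro t
      have hfun : iteratedDeriv n x = fun t => (-s / xmax) ^ n * ∑ k ∈ Finset.range n,
          (eulerianNumber n k : ℝ) * x t ^ (k + 1) * (x t - xmax) ^ (n - k) := funext ih
      rw [iteratedDeriv_succ, hfun]
      have hx : HasDerivAt x (deriv x t) t := (hdiff t).hasDerivAt
      have hterm : ∀ k ∈ Finset.range n, HasDerivAt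
          (fun t => (eulerianNumber n k : ℝ) * (x t ^ (k + 1) * (x t - xmax) ^ (n - k)))
          ((eulerianNumber n k : ℝ) * (((k+1 : ℕ) : ℝ) * x t ^ (k+1-1) * deriv x t * (x t - xmax) ^ (n-k)
            + x t ^ (k+1) * (((n-k : ℕ) : ℝ) * (x t - xmax) ^ (n-k-1) * deriv x t))) t := by
        intro k _
        exact ((hx.pow (k+1)).mul ((hx.sub_const xmax).pow (n-k))).const_mul _
      have hsum : HasDerivAt (fun t => (-s / xmax) ^ n * ∑ k ∈ Finset.range n,
          (eulerianNumber n k : ℝ) * (x t ^ (k + 1) * (x t - xmax) ^ (n - k)))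
          ((-s / xmax) ^ n * ∑ k ∈ Finset.range n,
            ((eulerianNumber n k : ℝ) * (((k+1 : ℕ) : ℝ) * x t ^ (k+1-1) * deriv x t * (x t - xmax) ^ (n-k)
              + x t ^ (k+1) * (((n-k : ℕ) : ℝ) * (x t - xmax) ^ (n-k-1) * deriv x t)))) t :=
        (HasDerivAt.fun_sum hterm).const_mul _
      have heq : (fun t => (-s / xmax) ^ n * ∑ k ∈ Finset.range n,
          (eulerianNumber n k : ℝ) * x t ^ (k + 1) * (x t - xmax) ^ (n - k))
          = (fun t => (-s / xmax) ^ n * ∑ k ∈ Finset.range n,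
          (eulerianNumber n k : ℝ) * (x t ^ (k + 1) * (x t - xmax) ^ (n - k))) := by
        funext t
        congr 1
        exact Finset.sum_congr rfl fun k _ => (mul_assoc _ _ _)
      rw [heq, hsum.deriv]
      rw [hode' t]
      have hpt : ∀ k ∈ Finset.range n,
          ((eulerianNumber n k : ℝ) * (((k+1 : ℕ) : ℝ) * x t ^ (k+1-1) * (-s / xmax * x t * (x t - xmax)) * (x t - xmax) ^ (n-k)
            + x t ^ (k+1) * (((n-k : ℕ) : ℝ) * (x t - xmax) ^ (n-k-1) * (-s / xmax * x t * (x t - xmax)))))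
          = (-s / xmax) * ((eulerianNumber n k : ℝ) *
            (((k:ℝ)+1) * x t ^ k * (x t - xmax)^(n-k) + ((n-k : ℕ) : ℝ) * x t ^(k+1) * (x t - xmax)^(n-k-1)) * (x t * (x t - xmax))) := by
        intro k hk
        have e4 : k + 1 - 1 = k := by omega
        rw [e4]
        push_cast
        ring
      rw [Finset.sum_congr rfl hpt, ← Finset.mul_sum, ← mul_assoc, ← pow_succ,
        sum_step n hn (x t) (x t - xmax)]
  intro n hn t
  exact key n (by omega) t
end

section
/- Let x(t) = 1/(1 + e^{-t}) be the standard logistic function. Then for every n ≥ 2 and every t ∈ ℝ, x^(n)(t) = Σ_{k=0}^{n−1} (−1)^k · ⟨n,k⟩ · x(t)^{k+1} · (1 − x(t))^{n−k}, where ⟨n,k⟩ denotes the Eulerian number. -/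
open Finset Equiv

/-- the word of a permutation, as a function `ℕ → ℕ` (0 out of range). -/
def wrd {m : ℕ} (σ : Equiv.Perm (Fin m)) (j : ℕ) : ℕ :=
  if h : j < m then (σ ⟨j, h⟩ : ℕ) else 0

/-- number of ascents, as a sum. -/
def ascN {m : ℕ} (σ : Equiv.Perm (Fin m)) : ℕ :=
  ∑ j ∈ Finset.range (m - 1), if wrd σ j < wrd σ (j + 1) then 1 else 0

lemma wrd_of_lt {m : ℕ} (σ : Equiv.Perm (Fin m)) (j : ℕ) (h : j < m) :
    wrd σ j = (σ ⟨j, h⟩ : ℕ) := by simp [wrd, h]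

lemma wrd_of_le {m : ℕ} (σ : Equiv.Perm (Fin m)) (j : ℕ) (h : m ≤ j) :
    wrd σ j = 0 := by simp [wrd, Nat.not_lt.2 h]

lemma wrd_lt {m : ℕ} (σ : Equiv.Perm (Fin m)) (j : ℕ) (h : j < m) :
    wrd σ j < m := by rw [wrd_of_lt σ j h]; exact (σ ⟨j, h⟩).isLt

lemma card_ascents {m : ℕ} (σ : Equiv.Perm (Fin m)) :
    Nat.card {i : Fin m // ∃ h : (i : ℕ) + 1 < m, σ i < σ ⟨(i : ℕ) + 1, h⟩} = ascN σ := by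
  classical
  rw [Nat.card_eq_fintype_card, Fintype.card_subtype]
  have key : ∀ i : Fin m,
      (∃ h : (i : ℕ) + 1 < m, σ i < σ ⟨(i : ℕ) + 1, h⟩) ↔
      ((i : ℕ) + 1 < m ∧ wrd σ (i : ℕ) < wrd σ ((i : ℕ) + 1)) := by
    intro i
    have e1 : wrd σ (i : ℕ) = (σ i : ℕ) := by
      rw [wrd_of_lt σ _ i.isLt]
    constructor
    · rintro ⟨h, hlt⟩
      exact ⟨h, by rw [e1, wrd_of_lt σ _ h]; exact hlt⟩
    · rintro ⟨h, hlt⟩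
      rw [e1, wrd_of_lt σ _ h] at hlt
      exact ⟨h, hlt⟩
  have step1 : (Finset.univ.filter fun i : Fin m =>
        ∃ h : (i : ℕ) + 1 < m, σ i < σ ⟨(i : ℕ) + 1, h⟩).card
      = (Finset.univ.filter fun i : Fin m =>
        ((i : ℕ) + 1 < m ∧ wrd σ (i : ℕ) < wrd σ ((i : ℕ) + 1))).card := by
    congr 1
    exact Finset.filter_congr fun i _ => key i
  rw [step1, Finset.card_filter]
  have step2 := Fin.sum_univ_eq_sum_range
    (fun j : ℕ => if (j + 1 < m ∧ wrd σ j < wrd σ (j + 1)) then 1 else 0) m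
  rw [step2]
  unfold ascN
  rcases Nat.eq_zero_or_pos m with hm | hm
  · simp [hm]
  obtain ⟨s, rfl⟩ : ∃ s, m = s + 1 := ⟨m - 1, by omega⟩
  rw [Finset.sum_range_succ]
  have h1 : ¬ (s + 1 < s + 1) := by omega
  simp only [h1, false_and, if_false, add_zero, Nat.add_sub_cancel]
  refine Finset.sum_congr rfl fun j hj => ?_
  rw [Finset.mem_range] at hj
  have : j + 1 < s + 1 := by omega
  simp only [this, true_and]

/-- insertion of the maximum at position `p` -/
def ins {n : ℕ} (τ : Equiv.Perm (Fin n)) (p : Fin (n + 1)) : Equiv.Perm (Fin (n + 1)) :=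
  (finSuccEquiv' p).trans ((Equiv.optionCongr τ).trans (finSuccEquiv' (Fin.last n)).symm)

lemma ins_apply_self {n : ℕ} (τ : Equiv.Perm (Fin n)) (p : Fin (n + 1)) :
    ins τ p p = Fin.last n := by
  simp [ins, finSuccEquiv'_at]

lemma ins_apply_succAbove {n : ℕ} (τ : Equiv.Perm (Fin n)) (p : Fin (n + 1)) (i : Fin n) :
    ins τ p (p.succAbove i) = (τ i).castSucc := by
  simp [ins, finSuccEquiv'_succAbove, finSuccEquiv'_symm_some_below]

lemma wrd_ins {n : ℕ} (τ : Equiv.Perm (Fin n)) (p : Fin (n + 1)) (j : ℕ) :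
    wrd (ins τ p) j =
      if j < (p : ℕ) then wrd τ j else if j = (p : ℕ) then n else wrd τ (j - 1) := by
  rcases lt_or_ge j (n + 1) with hj | hj
  · rcases lt_trichotomy j (p : ℕ) with h | h | h
    · have hjn : j < n := by have := p.isLt; omega
      have hpos : (⟨j, hj⟩ : Fin (n + 1)) = p.succAbove ⟨j, hjn⟩ := by
        rw [Fin.succAbove_of_castSucc_lt]
        · rfl
        · simpa [Fin.lt_iff_val_lt_val] using h
      rw [wrd_of_lt _ j hj, hpos, ins_apply_succAbove]
      simp [h, wrd_of_lt τ j hjn]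
    · have : (⟨j, hj⟩ : Fin (n + 1)) = p := by
        apply Fin.ext; exact h
      rw [wrd_of_lt _ j hj, this, ins_apply_self]
      simp [h]
    · have hj1 : j - 1 < n := by omega
      have hpos : (⟨j, hj⟩ : Fin (n + 1)) = p.succAbove ⟨j - 1, hj1⟩ := by
        rw [Fin.succAbove_of_le_castSucc]
        · apply Fin.ext; simp [Fin.succ]; omega
        · simp [Fin.le_iff_val_le_val]; omega
      rw [wrd_of_lt _ j hj, hpos, ins_apply_succAbove]
      have : ¬ j < (p : ℕ) := by omega
      have h2 : j ≠ (p : ℕ) := by omega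
      simp [this, h2, wrd_of_lt τ _ hj1]
  · rw [wrd_of_le _ j hj]
    have h1 : ¬ j < (p : ℕ) := by have := p.isLt; omega
    have h2 : j ≠ (p : ℕ) := by have := p.isLt; omega
    rw [if_neg h1, if_neg h2, wrd_of_le τ _ (by omega)]

lemma ascN_ins {n : ℕ} (τ : Equiv.Perm (Fin n)) (p : Fin (n + 1)) :
    ascN (ins τ p) + (if wrd τ ((p : ℕ) - 1) < wrd τ (p : ℕ) then 1 else 0)
      = ascN τ + (if (p : ℕ) = 0 then 0 else 1) := by
  set a : ℕ → ℕ := fun i => if wrd τ i < wrd τ (i + 1) then 1 else 0 with ha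
  set b : ℕ → ℕ := fun j => if wrd (ins τ p) j < wrd (ins τ p) (j + 1) then 1 else 0 with hb
  have hascσ : ascN (ins τ p) = ∑ j ∈ Finset.range n, b j := by
    rw [hb]; simp only [ascN, Nat.add_sub_cancel]
  have hascτ : ascN τ = ∑ j ∈ Finset.range (n - 1), a j := rfl
  have hwlt : ∀ j, j < n → wrd τ j < n := fun j h => wrd_lt τ j h
  have hw0 : ∀ j, n ≤ j → wrd τ j = 0 := fun j h => wrd_of_le τ j h
  have hwn : ∀ j, ¬ n < wrd τ j := by
    intro j
    rcases lt_or_ge j n with h | h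
    · exact Nat.not_lt.2 (le_of_lt (hwlt _ h))
    · rw [hw0 _ h]; omega
  rcases Nat.eq_zero_or_pos (p : ℕ) with hp | hp
  · -- p = 0 : no ascent change
    have hb0 : ∀ j ∈ Finset.range n, b j = (if j = 0 then 0 else a (j - 1)) := by
      intro j hj
      rw [Finset.mem_range] at hj
      rcases Nat.eq_zero_or_pos j with h0 | h0
      · subst h0
        have w1 : wrd (ins τ p) 0 = n := by
          rw [wrd_ins, if_neg (by omega), if_pos (by omega)]
        have w2 : wrd (ins τ p) (0 + 1) = wrd τ 0 := by
          rw [wrd_ins, if_neg (by omega), if_neg (by omega)]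
        rw [hb]; simp only [w1, w2, if_pos rfl]
        rw [if_neg (hwn 0)]
        simp
      · have w1 : wrd (ins τ p) j = wrd τ (j - 1) := by
          rw [wrd_ins, if_neg (by omega), if_neg (by omega)]
        have w2 : wrd (ins τ p) (j + 1) = wrd τ (j + 1 - 1) := by
          rw [wrd_ins, if_neg (by omega), if_neg (by omega)]
        rw [hb]; simp only [w1, w2, if_neg (by omega : ¬ j = 0)]
        have e : j + 1 - 1 = (j - 1) + 1 := by omega
        rw [e, ha]
    rw [Finset.sum_congr rfl hb0] at hascσ
    have hshift : ∑ j ∈ Finset.range n, (if j = 0 then 0 else a (j - 1))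
        = ∑ j ∈ Finset.range (n - 1), a j := by
      rcases Nat.eq_zero_or_pos n with h0 | h0
      · simp [h0]
      obtain ⟨s, rfl⟩ : ∃ s, n = s + 1 := ⟨n - 1, by omega⟩
      rw [Finset.sum_range_succ']
      simp
    rw [hascσ, hshift, ← hascτ, hp]
    have hfalse : ¬ wrd τ (0 - 1) < wrd τ 0 := by simp
    rw [if_neg hfalse, if_pos rfl]
  · -- p = q + 1
    obtain ⟨q, hq⟩ : ∃ q, (p : ℕ) = q + 1 := ⟨(p : ℕ) - 1, by omega⟩
    have hqn : q + 1 ≤ n := by have := p.isLt; omega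
    -- pointwise values of b
    have hblt : ∀ j, j < q → b j = a j := by
      intro j h
      have w1 : wrd (ins τ p) j = wrd τ j := by rw [wrd_ins, if_pos (by omega)]
      have w2 : wrd (ins τ p) (j + 1) = wrd τ (j + 1) := by
        rw [wrd_ins, if_pos (by omega)]
      rw [hb]; simp only [w1, w2]; rfl
    have hbq : b q = 1 := by
      have w1 : wrd (ins τ p) q = wrd τ q := by rw [wrd_ins, if_pos (by omega)]
      have w2 : wrd (ins τ p) (q + 1) = n := by
        rw [wrd_ins, if_neg (by omega), if_pos (by omega)]
      rw [hb]; simp only [w1, w2]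
      rw [if_pos (hwlt q (by omega))]
    have hbq1 : q + 1 < n → b (q + 1) = 0 := by
      intro h
      have w1 : wrd (ins τ p) (q + 1) = n := by
        rw [wrd_ins, if_neg (by omega), if_pos (by omega)]
      have w2 : wrd (ins τ p) (q + 1 + 1) = wrd τ (q + 1 + 1 - 1) := by
        rw [wrd_ins, if_neg (by omega), if_neg (by omega)]
      rw [hb]; simp only [w1, w2]
      rw [if_neg (hwn _)]
    have hbgt : ∀ j, q + 1 < j → b j = a (j - 1) := by
      intro j h
      have w1 : wrd (ins τ p) j = wrd τ (j - 1) := by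
        rw [wrd_ins, if_neg (by omega), if_neg (by omega)]
      have w2 : wrd (ins τ p) (j + 1) = wrd τ (j + 1 - 1) := by
        rw [wrd_ins, if_neg (by omega), if_neg (by omega)]
      rw [hb]; simp only [w1, w2]
      have e : j + 1 - 1 = (j - 1) + 1 := by omega
      rw [e, ha]
    -- a q = 0 when q = n - 1
    have haq0 : q + 1 = n → a q = 0 := by
      intro h
      have h0 : wrd τ (q + 1) = 0 := hw0 _ (by omega)
      rw [ha]; simp only [h0]
      rw [if_neg (by omega)]
    -- split off the index q on both sides
    have hqmem : q ∈ Finset.range n := Finset.mem_range.2 (by omega)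
    have hsplitb : ∑ j ∈ Finset.range n, b j = 1 + ∑ j ∈ (Finset.range n).erase q, b j := by
      rw [← Finset.add_sum_erase _ b hqmem, hbq]
    have hsplita : ∑ j ∈ Finset.range (n - 1), a j
        = a q + ∑ j ∈ (Finset.range (n - 1)).erase q, a j := by
      rcases lt_or_ge q (n - 1) with h | h
      · rw [← Finset.add_sum_erase _ a (Finset.mem_range.2 h)]
      · have hq' : q + 1 = n := by omega
        have hnm : q ∉ Finset.range (n - 1) := by
          simp only [Finset.mem_range]; omega
        rw [haq0 hq', Finset.erase_eq_of_notMem hnm, zero_add]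
    -- drop the zero term at q + 1
    have hdrop : ∑ j ∈ (Finset.range n).erase q, b j
        = ∑ j ∈ ((Finset.range n).erase q).erase (q + 1), b j := by
      rcases lt_or_ge (q + 1) n with h | h
      · rw [Finset.sum_erase _ (hbq1 h)]
      · have hnm : (q + 1) ∉ (Finset.range n).erase q := by
          simp only [Finset.mem_erase, Finset.mem_range]
          omega
        rw [Finset.erase_eq_of_notMem hnm]
    -- bijection between the remaining index sets
    have hbij : ∑ j ∈ ((Finset.range n).erase q).erase (q + 1), b j
        = ∑ j ∈ (Finset.range (n - 1)).erase q, a j := by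
      apply Finset.sum_nbij' (fun j => if j < q then j else j - 1)
        (fun i => if i < q then i else i + 1)
      · intro j hj
        simp only [Finset.mem_erase, Finset.mem_range] at hj ⊢
        split_ifs <;> omega
      · intro i hi
        simp only [Finset.mem_erase, Finset.mem_range] at hi ⊢
        split_ifs <;> omega
      · intro j hj
        simp only [Finset.mem_erase, Finset.mem_range] at hj
        split_ifs <;> omega
      · intro i hi
        simp only [Finset.mem_erase, Finset.mem_range] at hi
        split_ifs <;> omega
      · intro j hj
        simp only [Finset.mem_erase, Finset.mem_range] at hj
        rcases lt_or_ge j q with h | h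
        · rw [if_pos h, hblt j h]
        · rw [if_neg (by omega), hbgt j (by omega)]
    have hcond : (if wrd τ ((p : ℕ) - 1) < wrd τ (p : ℕ) then 1 else 0) = a q := by
      rw [ha, hq, Nat.add_sub_cancel]
    have hp2 : ¬ ((p : ℕ) = 0) := by omega
    rw [hascσ, hascτ, hsplitb, hdrop, hbij, hsplita, hcond, if_neg hp2]
    ring

/-- number of permutations of `Fin n` with exactly `k` ascents -/
def AA (n k : ℕ) : ℕ := Fintype.card {σ : Equiv.Perm (Fin n) // ascN σ = k}

lemma euler_eq_AA (n k : ℕ) : eulerianNumber n k = AA n k := by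
  unfold eulerianNumber AA
  rw [← Nat.card_eq_fintype_card]
  exact Nat.card_congr (Equiv.subtypeEquivRight fun σ => by rw [card_ascents])

lemma ascN_le {n : ℕ} (τ : Equiv.Perm (Fin n)) : ascN τ ≤ n - 1 := by
  unfold ascN
  calc ∑ j ∈ Finset.range (n - 1), (if wrd τ j < wrd τ (j + 1) then 1 else 0)
      ≤ ∑ j ∈ Finset.range (n - 1), 1 :=
        Finset.sum_le_sum fun j _ => by split_ifs <;> omega
    _ = n - 1 := by simp

lemma AA_zero (n : ℕ) : AA n 0 = 1 := by
  rw [AA, Fintype.card_eq_one_iff]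
  have hrev : ascN (Fin.revPerm : Equiv.Perm (Fin n)) = 0 := by
    unfold ascN
    apply Finset.sum_eq_zero
    intro j hj
    rw [Finset.mem_range] at hj
    have h1 : j < n := by omega
    have h2 : j + 1 < n := by omega
    rw [wrd_of_lt _ j h1, wrd_of_lt _ (j+1) h2]
    simp only [Fin.revPerm_apply, Fin.val_rev]
    rw [if_neg (by omega)]
  refine ⟨⟨Fin.revPerm, hrev⟩, ?_⟩
  rintro ⟨σ, hσ⟩
  ext1
  show σ = Fin.revPerm
  -- σ has no ascents, hence is strictly antitone
  have hterm : ∀ (j : ℕ) (hj : j + 1 < n), σ ⟨j + 1, hj⟩ < σ ⟨j, by omega⟩ := by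
    intro j hj
    have h0 : (if wrd σ j < wrd σ (j + 1) then 1 else 0) = 0 := by
      refine Finset.sum_eq_zero_iff.mp hσ j ?_
      rw [Finset.mem_range]; omega
    have h1 : ¬ wrd σ j < wrd σ (j + 1) := by
      by_contra h; rw [if_pos h] at h0; omega
    rw [wrd_of_lt σ j (by omega), wrd_of_lt σ (j+1) hj] at h1
    have hne : σ ⟨j + 1, hj⟩ ≠ σ ⟨j, by omega⟩ := by
      intro h
      have := σ.injective h
      simp [Fin.ext_iff] at this
    have := Nat.lt_of_le_of_ne (Nat.not_lt.mp h1) ?_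
    · exact this
    · intro h
      exact hne (Fin.ext h)
  have hanti : StrictAnti σ := by
    match n, σ, hterm with
    | 0, σ, _ => intro i; exact absurd i.isLt (by omega)
    | (m+1), σ, hterm =>
      rw [Fin.strictAnti_iff_succ_lt]
      intro i
      have := hterm (i : ℕ) (by omega)
      exact this
  have hmono : StrictMono (fun i => σ (Fin.rev i)) :=
    fun i j hij => hanti (Fin.rev_lt_rev.mpr hij)
  haveI : WellFoundedLT (Fin n) := inferInstance
  have hid : (fun i => σ (Fin.rev i)) = (id : Fin n → Fin n) := by
    apply (hmono.range_inj strictMono_id).mp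
    rw [Set.range_id, Set.range_eq_univ]
    exact fun y => ⟨Fin.rev (σ.symm y), by simp⟩
  apply Equiv.ext
  intro i
  have := congrFun hid (Fin.rev i)
  simp only [Fin.rev_rev, id_eq] at this
  simp [this]

lemma AA_of_ge {n k : ℕ} (hn : 1 ≤ n) (h : n ≤ k) : AA n k = 0 := by
  rw [AA, Fintype.card_eq_zero_iff]
  constructor
  rintro ⟨σ, hσ⟩
  have := ascN_le σ
  omega

lemma ins_bijective (n : ℕ) :
    Function.Bijective (fun x : Equiv.Perm (Fin n) × Fin (n + 1) => ins x.1 x.2) := by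
  rw [Fintype.bijective_iff_injective_and_card]
  constructor
  · rintro ⟨τ, p⟩ ⟨τ', p'⟩ h
    simp only at h
    have hp : p = p' := by
      apply (ins τ' p').injective
      rw [ins_apply_self, ← h, ins_apply_self]
    subst hp
    have hτ : τ = τ' := by
      apply Equiv.ext
      intro i
      have h1 : (τ i).castSucc = (τ' i).castSucc := by
        rw [← ins_apply_succAbove τ p i, h, ins_apply_succAbove]
      exact Fin.castSucc_injective n h1
    rw [hτ]
  · rw [Fintype.card_prod, Fintype.card_perm, Fintype.card_perm, Fintype.card_fin,
      Fintype.card_fin, Nat.factorial_succ, Nat.mul_comm]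

/-- the "keep" positions: inserting the max there does not change the ascent count -/
def keep {n : ℕ} (τ : Equiv.Perm (Fin n)) (p : Fin (n + 1)) : Prop :=
  (p : ℕ) = 0 ∨ wrd τ ((p : ℕ) - 1) < wrd τ (p : ℕ)

instance {n : ℕ} (τ : Equiv.Perm (Fin n)) : DecidablePred (keep τ) := fun p => by
  unfold keep; infer_instance

lemma card_keep {n : ℕ} (τ : Equiv.Perm (Fin n)) :
    Fintype.card {p : Fin (n + 1) // keep τ p} = ascN τ + 1 := by
  rw [Fintype.card_subtype, Finset.card_filter]
  rw [show (∑ p : Fin (n+1), if keep τ p then 1 else 0)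
      = ∑ p : Fin (n+1), (fun j : ℕ => if (j = 0 ∨ wrd τ (j - 1) < wrd τ j) then 1 else 0) (p : ℕ)
    from rfl]
  rw [Fin.sum_univ_eq_sum_range (fun j : ℕ => if (j = 0 ∨ wrd τ (j - 1) < wrd τ j) then 1 else 0)
    (n + 1)]
  rw [Finset.sum_range_succ']
  have h0 : (if ((0:ℕ) = 0 ∨ wrd τ (0 - 1) < wrd τ 0) then 1 else 0) = 1 := by
    rw [if_pos (Or.inl rfl)]
  rw [h0]
  congr 1
  have hstep : ∀ j ∈ Finset.range n,
      (if (j + 1 = 0 ∨ wrd τ (j + 1 - 1) < wrd τ (j + 1)) then 1 else 0)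
        = (if wrd τ j < wrd τ (j + 1) then 1 else 0) := by
    intro j hj
    have : (j + 1 = 0 ∨ wrd τ (j + 1 - 1) < wrd τ (j + 1)) ↔ wrd τ j < wrd τ (j + 1) := by
      simp only [Nat.add_sub_cancel]
      constructor
      · rintro (h | h)
        · omega
        · exact h
      · exact Or.inr
    rw [if_congr this rfl rfl]
  rw [Finset.sum_congr rfl hstep]
  unfold ascN
  rcases Nat.eq_zero_or_pos n with h | h
  · simp [h]
  obtain ⟨s, rfl⟩ : ∃ s, n = s + 1 := ⟨n - 1, by omega⟩
  rw [Finset.sum_range_succ, Nat.add_sub_cancel]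
  have : (if wrd τ s < wrd τ (s + 1) then 1 else 0) = 0 := by
    rw [if_neg]
    rw [wrd_of_le τ (s+1) (by omega)]
    omega
  rw [this, add_zero]

lemma card_not_keep {n : ℕ} (τ : Equiv.Perm (Fin n)) :
    Fintype.card {p : Fin (n + 1) // ¬ keep τ p} = n - ascN τ := by
  rw [Fintype.card_subtype_compl, card_keep, Fintype.card_fin]
  omega

lemma ascN_ins_eq_iff {n k : ℕ} (τ : Equiv.Perm (Fin n)) (p : Fin (n + 1)) :
    (ascN (ins τ p) = k + 1) ↔
      ((ascN τ = k + 1 ∧ keep τ p) ∨ (ascN τ = k ∧ ¬ keep τ p)) := by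
  have key := ascN_ins τ p
  unfold keep
  by_cases hp0 : (p : ℕ) = 0
  · have hd : ¬ wrd τ ((p : ℕ) - 1) < wrd τ (p : ℕ) := by
      rw [hp0]; simp
    rw [if_neg hd, if_pos hp0] at key
    constructor
    · intro h; left; constructor; omega; exact Or.inl hp0
    · rintro (⟨h1, _⟩ | ⟨h1, h2⟩)
      · omega
      · exact absurd (Or.inl hp0) h2
  · by_cases hd : wrd τ ((p : ℕ) - 1) < wrd τ (p : ℕ)
    · rw [if_pos hd, if_neg hp0] at key
      constructor
      · intro h; left; exact ⟨by omega, Or.inr hd⟩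
      · rintro (⟨h1, _⟩ | ⟨h1, h2⟩)
        · omega
        · exact absurd (Or.inr hd) h2
    · rw [if_neg hd, if_neg hp0] at key
      constructor
      · intro h; right
        refine ⟨by omega, ?_⟩
        rintro (h' | h') <;> [exact hp0 h'; exact hd h']
      · rintro (⟨h1, h2⟩ | ⟨h1, _⟩)
        · rcases h2 with h' | h' <;> [exact absurd h' hp0; exact absurd h' hd]
        · omega

lemma AA_rec (n k : ℕ) :
    AA (n + 1) (k + 1) = (k + 2) * AA n (k + 1) + (n - k) * AA n k := by
  classical
  have step1 : AA (n + 1) (k + 1)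
      = Fintype.card {x : Equiv.Perm (Fin n) × Fin (n + 1) // ascN (ins x.1 x.2) = k + 1} := by
    rw [AA]
    exact (Fintype.card_congr
      ((Equiv.ofBijective _ (ins_bijective n)).subtypeEquiv fun x => Iff.rfl)).symm
  have step2 : Fintype.card {x : Equiv.Perm (Fin n) × Fin (n + 1) // ascN (ins x.1 x.2) = k + 1}
      = ∑ τ : Equiv.Perm (Fin n), Fintype.card {p : Fin (n + 1) // ascN (ins τ p) = k + 1} := by
    rw [Fintype.card_congr (Equiv.subtypeProdEquivSigmaSubtype
      (fun (τ : Equiv.Perm (Fin n)) (p : Fin (n + 1)) => ascN (ins τ p) = k + 1))]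
    exact Fintype.card_sigma
  have step3 : ∀ τ : Equiv.Perm (Fin n),
      Fintype.card {p : Fin (n + 1) // ascN (ins τ p) = k + 1}
        = (if ascN τ = k + 1 then k + 2 else 0) + (if ascN τ = k then n - k else 0) := by
    intro τ
    by_cases h1 : ascN τ = k + 1
    · rw [if_pos h1, if_neg (by omega), add_zero]
      have he : ∀ p : Fin (n+1), (ascN (ins τ p) = k + 1) ↔ keep τ p := by
        intro p
        rw [ascN_ins_eq_iff]
        constructor
        · rintro (⟨_, h⟩ | ⟨h, _⟩) <;> [exact h; omega]
        · intro h; exact Or.inl ⟨h1, h⟩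
      rw [Fintype.card_congr (Equiv.subtypeEquivRight he), card_keep, h1]
    · by_cases h2 : ascN τ = k
      · rw [if_neg h1, if_pos h2, zero_add]
        have he : ∀ p : Fin (n+1), (ascN (ins τ p) = k + 1) ↔ ¬ keep τ p := by
          intro p
          rw [ascN_ins_eq_iff]
          constructor
          · rintro (⟨h, _⟩ | ⟨_, h⟩) <;> [omega; exact h]
          · intro h; exact Or.inr ⟨h2, h⟩
        rw [Fintype.card_congr (Equiv.subtypeEquivRight he), card_not_keep, h2]
      · rw [if_neg h1, if_neg h2, add_zero]
        rw [Fintype.card_eq_zero_iff]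
        constructor
        rintro ⟨p, hp⟩
        rw [ascN_ins_eq_iff] at hp
        rcases hp with ⟨h, _⟩ | ⟨h, _⟩ <;> [exact h1 h; exact h2 h]
  rw [step1, step2, Finset.sum_congr rfl (fun τ _ => step3 τ), Finset.sum_add_distrib]
  congr 1
  · rw [← Finset.sum_filter, Finset.sum_const, smul_eq_mul, mul_comm]
    congr 1
    rw [AA, Fintype.card_subtype]
  · rw [← Finset.sum_filter, Finset.sum_const, smul_eq_mul, mul_comm]
    congr 1
    rw [AA, Fintype.card_subtype]

lemma alg (n : ℕ) (hn : 1 ≤ n) (u v : ℝ) :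
    ∑ k ∈ Finset.range n,
      ((-1:ℝ)^k * (AA n k : ℝ) * (((k+1 : ℕ) : ℝ) * u ^ (k+1-1) * (u * v)) * v ^ (n-k)
        + ((-1:ℝ)^k * (AA n k : ℝ) * u ^ (k+1))
            * (((n-k : ℕ) : ℝ) * v ^ (n-k-1) * (0 - u * v)))
    = ∑ k ∈ Finset.range (n+1), (-1:ℝ)^k * (AA (n+1) k : ℝ) * u ^ (k+1) * v ^ (n+1-k) := by
  have lhs_eq : ∀ k ∈ Finset.range n,
      ((-1:ℝ)^k * (AA n k : ℝ) * (((k+1 : ℕ) : ℝ) * u ^ (k+1-1) * (u * v)) * v ^ (n-k)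
        + ((-1:ℝ)^k * (AA n k : ℝ) * u ^ (k+1))
            * (((n-k : ℕ) : ℝ) * v ^ (n-k-1) * (0 - u * v)))
      = ((-1:ℝ)^k * ((k+1 : ℕ) : ℝ) * (AA n k : ℝ) * u ^ (k+1) * v ^ (n+1-k)
        + (-1:ℝ)^(k+1) * ((n-k : ℕ) : ℝ) * (AA n k : ℝ) * u ^ (k+2) * v ^ (n-k)) := by
    intro k hk
    rw [Finset.mem_range] at hk
    obtain ⟨m, hm1, hm2⟩ : ∃ m, n - k = m + 1 ∧ n + 1 - k = m + 2 :=
      ⟨n - k - 1, by omega, by omega⟩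
    rw [Nat.add_sub_cancel, hm1, hm2, Nat.add_sub_cancel]
    push_cast
    ring
  rw [Finset.sum_congr rfl lhs_eq, Finset.sum_add_distrib]
  -- right-hand side: peel off k = 0 and use the recurrence
  rw [Finset.sum_range_succ']
  have rhs_eq : ∀ j ∈ Finset.range n,
      (-1:ℝ)^(j+1) * (AA (n+1) (j+1) : ℝ) * u ^ (j+1+1) * v ^ (n+1-(j+1))
      = ((-1:ℝ)^(j+1) * ((j+2 : ℕ) : ℝ) * (AA n (j+1) : ℝ) * u ^ (j+2) * v ^ (n-j)
        + (-1:ℝ)^(j+1) * ((n-j : ℕ) : ℝ) * (AA n j : ℝ) * u ^ (j+2) * v ^ (n-j)) := by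
    intro j hj
    rw [Finset.mem_range] at hj
    rw [AA_rec n j]
    have e1 : n + 1 - (j + 1) = n - j := by omega
    rw [e1]
    push_cast
    ring
  rw [Finset.sum_congr rfl rhs_eq, Finset.sum_add_distrib]
  -- match the three pieces
  have piece1 : ∑ k ∈ Finset.range n,
      (-1:ℝ)^k * ((k+1 : ℕ) : ℝ) * (AA n k : ℝ) * u ^ (k+1) * v ^ (n+1-k)
      = (∑ j ∈ Finset.range n,
          (-1:ℝ)^(j+1) * ((j+2 : ℕ) : ℝ) * (AA n (j+1) : ℝ) * u ^ (j+2) * v ^ (n-j))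
        + (-1:ℝ)^0 * (AA (n+1) 0 : ℝ) * u ^ (0+1) * v ^ (n+1-0) := by
    obtain ⟨s, rfl⟩ : ∃ s, n = s + 1 := ⟨n - 1, by omega⟩
    rw [Finset.sum_range_succ' (fun k =>
      (-1:ℝ)^k * ((k+1 : ℕ) : ℝ) * (AA (s+1) k : ℝ) * u ^ (k+1) * v ^ (s+1+1-k)) s]
    rw [Finset.sum_range_succ (fun j =>
      (-1:ℝ)^(j+1) * ((j+2 : ℕ) : ℝ) * (AA (s+1) (j+1) : ℝ) * u ^ (j+2) * v ^ (s+1-j))]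
    have hz : (AA (s+1) (s+1) : ℝ) = 0 := by
      rw [AA_of_ge (by omega) (le_refl _)]; norm_num
    rw [hz]
    have hterm : ∀ j ∈ Finset.range s,
        (-1:ℝ)^(j+1) * ((j+1+1 : ℕ) : ℝ) * (AA (s+1) (j+1) : ℝ) * u ^ (j+1+1) * v ^ (s+1+1-(j+1))
        = (-1:ℝ)^(j+1) * ((j+2 : ℕ) : ℝ) * (AA (s+1) (j+1) : ℝ) * u ^ (j+2) * v ^ (s+1-j) := by
      intro j hj
      have e : s+1+1-(j+1) = s+1-j := by omega
      rw [e]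
    rw [Finset.sum_congr rfl hterm]
    have h0 : ((0+1 : ℕ) : ℝ) = 1 := by norm_num
    rw [AA_zero, AA_zero]
    push_cast
    ring
  rw [piece1]
  ring

/-- For the standard logistic function x(t) = 1/(1 + e^{−t}) and n ≥ 2,
x⁽ⁿ⁾(t) = Σ_{k=0}^{n−1} (−1)^k ⟨n,k⟩ x(t)^{k+1} (1 − x(t))^{n−k}. -/
theorem standard_logistic_iterated_deriv_eulerian
    (x : ℝ → ℝ) (hx : ∀ t, x t = 1 / (1 + Real.exp (-t))) :
    ∀ n : ℕ, 2 ≤ n → ∀ t : ℝ,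
      iteratedDeriv n x t =
        ∑ k ∈ Finset.range n,
          (-1 : ℝ) ^ k * (eulerianNumber n k : ℝ) * x t ^ (k + 1) * (1 - x t) ^ (n - k) := by
  have hxd : ∀ t : ℝ, HasDerivAt x (x t * (1 - x t)) t := by
    intro t
    have hfun : x = fun s => (1 + Real.exp (-s))⁻¹ := funext fun s => by rw [hx s, one_div]
    have hpos : 0 < 1 + Real.exp (-t) := by positivity
    have he : HasDerivAt (fun s : ℝ => Real.exp (-s)) (Real.exp (-t) * (-1)) t :=
      (Real.hasDerivAt_exp (-t)).comp t (hasDerivAt_neg t)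
    have h1 : HasDerivAt (fun s : ℝ => 1 + Real.exp (-s)) (Real.exp (-t) * (-1)) t :=
      he.const_add (1 : ℝ)
    have h2 := h1.inv (ne_of_gt hpos)
    have hval : x t * (1 - x t) = -(Real.exp (-t) * (-1)) / (1 + Real.exp (-t)) ^ 2 := by
      rw [hx t]
      field_simp
      ring
    rw [hval, hfun]
    exact h2
  have main : ∀ n : ℕ, 1 ≤ n → ∀ t : ℝ,
      iteratedDeriv n x t =
        ∑ k ∈ Finset.range n,
          (-1 : ℝ) ^ k * (AA n k : ℝ) * x t ^ (k + 1) * (1 - x t) ^ (n - k) := by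
    intro n
    induction n with
    | zero => omega
    | succ n ih =>
      intro _
      rcases Nat.eq_zero_or_pos n with h0 | h0
      · subst h0
        intro t
        rw [iteratedDeriv_one, (hxd t).deriv]
        simp [AA_zero]
      · intro t
        have hfun2 : iteratedDeriv n x = fun s => ∑ k ∈ Finset.range n,
            (-1 : ℝ) ^ k * (AA n k : ℝ) * x s ^ (k + 1) * (1 - x s) ^ (n - k) :=
          funext fun s => ih h0 s
        rw [iteratedDeriv_succ, hfun2]
        have hd : HasDerivAt
            (fun s => ∑ k ∈ Finset.range n,
              (-1 : ℝ) ^ k * (AA n k : ℝ) * x s ^ (k + 1) * (1 - x s) ^ (n - k))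
            (∑ k ∈ Finset.range n,
              ((-1:ℝ)^k * (AA n k : ℝ)
                  * (((k+1 : ℕ) : ℝ) * x t ^ (k+1-1) * (x t * (1 - x t))) * (1 - x t) ^ (n-k)
                + ((-1:ℝ)^k * (AA n k : ℝ) * x t ^ (k+1))
                    * (((n-k : ℕ) : ℝ) * (1 - x t) ^ (n-k-1) * (0 - x t * (1 - x t))))) t := by
          apply HasDerivAt.fun_sum
          intro k _
          have h1 : HasDerivAt (fun s => (-1:ℝ)^k * (AA n k : ℝ) * x s ^ (k+1))
              ((-1:ℝ)^k * (AA n k : ℝ)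
                * (((k+1:ℕ):ℝ) * x t ^ (k+1-1) * (x t * (1 - x t)))) t :=
            ((hxd t).pow (k+1)).const_mul ((-1:ℝ)^k * (AA n k : ℝ))
          have h2 : HasDerivAt (fun s => (1 - x s) ^ (n-k))
              (((n-k:ℕ):ℝ) * (1 - x t) ^ (n-k-1) * (0 - x t * (1 - x t))) t :=
            ((hasDerivAt_const t (1:ℝ)).sub (hxd t)).pow (n-k)
          exact h1.mul h2
        rw [hd.deriv]
        exact alg n h0 (x t) (1 - x t)
  intro n hn t
  rw [main n (by omega) t]
  exact Finset.sum_congr rfl fun k _ => by rw [euler_eq_AA]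
end
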